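/- Let f1, f2 : ℝ → ℝ be C² functions and p1, p2 : ℝ → ℝ polynomial functions of degree at most 1; set u(x,y) = f1(x)·p1(y) + f2(y)·p2(x) and f = −Δu. Let P be the bilinear corner interpolant on the unit square of u, let s be the linear transfinite boundary interpolant on the unit square of u − P, and set B(x,y) = x(1−x)y(1−y). Let φ1, …, φM : ℝ² → ℝ be C² functions and let x¹, …, x^N be points of the open square (0,1)². Define J : ℝ^M → ℝ by J(ω) = Σ_{i=1}^N ( −Σ_{j=1}^M ω_j · Δ(B·φ_j)(x^i) − f(x^i) − Δs(x^i) − ΔP(x^i) )². If ω* is the unique minimizer of J over ℝ^M, then the RNN-BP solution û(x,y) = B(x,y)·Σ_{j=1}^M ω*_j·φ_j(x,y) + s(x,y) + P(x,y) satisfies û(x,y) = u(x,y) for all (x,y) ∈ [0,1]². -/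

import Mathlib

open Finset in
/-- The bilinear corner interpolant on the unit square. -/
noncomputable def bilinearCorner (u : ℝ → ℝ → ℝ) (x y : ℝ) : ℝ :=
  (1 - x) * (1 - y) * u 0 0 + (1 - x) * y * u 0 1 + x * (1 - y) * u 1 0 + x * y * u 1 1

/-- The linear transfinite boundary interpolant on the unit square. -/
noncomputable def linTransfinite (v : ℝ → ℝ → ℝ) (x y : ℝ) : ℝ :=
  (1 - x) * v 0 y + x * v 1 y + (1 - y) * v x 0 + y * v x 1

/-- Partial derivative in the first variable. -/
noncomputable def pdx (v : ℝ → ℝ → ℝ) (x y : ℝ) : ℝ := deriv (fun t => v t y) x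

/-- Partial derivative in the second variable. -/
noncomputable def pdy (v : ℝ → ℝ → ℝ) (x y : ℝ) : ℝ := deriv (fun t => v x t) y

/-- The two-dimensional Laplacian `Δv = ∂²v/∂x² + ∂²v/∂y²`. -/
noncomputable def lap (v : ℝ → ℝ → ℝ) (x y : ℝ) : ℝ :=
  pdx (pdx v) x y + pdy (pdy v) x y

open Function

/-! The boundary part `s + P` of the RNN-BP ansatz is already `u`: the Boolean sum of the linear
interpolants in `x` and in `y` reproduces every function that is affine in `y` plus one that is
affine in `x`. So the collocation residual vanishes at `ω = 0`, where `J` attains its least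
possible value `0`; uniqueness of the minimizer forces `ω* = 0`, and then `û = s + P = u`. -/

theorem Polynomial.eval_eq_one_sub_mul_eval_zero_add_mul_eval_one
    {R : Type*} [CommRing R] {p : Polynomial R} (hp : p.degree ≤ 1) (t : R) :
    p.eval t = (1 - t) * p.eval 0 + t * p.eval 1 := by
  rw [Polynomial.eq_X_add_C_of_degree_le_one hp]
  simp only [Polynomial.eval_add, Polynomial.eval_mul, Polynomial.eval_C, Polynomial.eval_X]
  ring

theorem lap_eq_iteratedDeriv (v : ℝ → ℝ → ℝ) (x y : ℝ) :
    lap v x y = iteratedDeriv 2 (v · y) x + iteratedDeriv 2 (v x ·) y := by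
  simp only [lap, pdx, pdy, iteratedDeriv_succ, iteratedDeriv_zero]

theorem lap_sub {v w : ℝ → ℝ → ℝ} (hv : ContDiff ℝ 2 (uncurry v))
    (hw : ContDiff ℝ 2 (uncurry w)) (x y : ℝ) :
    lap (fun a b => v a b - w a b) x y = lap v x y - lap w x y := by
  have h₁ {g : ℝ → ℝ → ℝ} (hg : ContDiff ℝ 2 (uncurry g)) : ContDiffAt ℝ 2 (g · y) x :=
    (hg.comp (contDiff_id.prodMk contDiff_const)).contDiffAt
  have h₂ {g : ℝ → ℝ → ℝ} (hg : ContDiff ℝ 2 (uncurry g)) : ContDiffAt ℝ 2 (g x ·) y :=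
    (hg.comp (contDiff_const.prodMk contDiff_id)).contDiffAt
  simp only [lap_eq_iteratedDeriv, iteratedDeriv_fun_sub (h₁ hv) (h₁ hw),
    iteratedDeriv_fun_sub (h₂ hv) (h₂ hw)]
  ring

theorem contDiff_bilinearCorner (u : ℝ → ℝ → ℝ) {n : WithTop ℕ∞} :
    ContDiff ℝ n (uncurry (bilinearCorner u)) := by
  unfold bilinearCorner uncurry
  fun_prop

theorem iteratedDeriv_two_eq_zero_of_affine {g : ℝ → ℝ}
    (hg : ∀ t, g t = (1 - t) * g 0 + t * g 1) (x : ℝ) : iteratedDeriv 2 g x = 0 := by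
  have hslope (t : ℝ) : HasDerivAt g (g 1 - g 0) t := by
    have hline := (((hasDerivAt_id t).const_sub 1).mul_const (g 0)).add
      ((hasDerivAt_id t).mul_const (g 1))
    exact (hline.congr_deriv (by ring)).congr_of_eventuallyEq
      (Filter.Eventually.of_forall hg)
  simp [iteratedDeriv_succ, funext fun t => (hslope t).deriv]

theorem lap_bilinearCorner (u : ℝ → ℝ → ℝ) (x y : ℝ) : lap (bilinearCorner u) x y = 0 := by
  rw [lap_eq_iteratedDeriv, iteratedDeriv_two_eq_zero_of_affine,
    iteratedDeriv_two_eq_zero_of_affine, add_zero] <;>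
  · intro t
    simp only [bilinearCorner]
    ring

theorem linTransfinite_sub_bilinearCorner {u v w : ℝ → ℝ → ℝ}
    (huvw : ∀ x y, u x y = v x y + w x y)
    (hv : ∀ x y, v x y = (1 - y) * v x 0 + y * v x 1)
    (hw : ∀ x y, w x y = (1 - x) * w 0 y + x * w 1 y) (x y : ℝ) :
    linTransfinite (fun a b => u a b - bilinearCorner u a b) x y =
      u x y - bilinearCorner u x y := by
  simp only [linTransfinite, bilinearCorner, huvw]
  rw [hv x y, hv 0 y, hv 1 y, hw x y, hw x 0, hw x 1]
  ring

theorem rnnBP_exact_poisson_general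
    (M N : ℕ)
    (f1 f2 : ℝ → ℝ) (hf1 : ContDiff ℝ 2 f1) (hf2 : ContDiff ℝ 2 f2)
    (p1 p2 : Polynomial ℝ) (hp1 : p1.degree ≤ 1) (hp2 : p2.degree ≤ 1)
    (u : ℝ → ℝ → ℝ)
    (hu : ∀ x y : ℝ, u x y = f1 x * p1.eval y + f2 y * p2.eval x)
    (f : ℝ → ℝ → ℝ) (hf : ∀ x y : ℝ, f x y = -(lap u x y))
    (P : ℝ → ℝ → ℝ) (hP : ∀ x y : ℝ, P x y = bilinearCorner u x y)
    (s : ℝ → ℝ → ℝ)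
    (hs : ∀ x y : ℝ, s x y = linTransfinite (fun a b => u a b - P a b) x y)
    (B : ℝ → ℝ → ℝ)
    (φ : Fin M → ℝ → ℝ → ℝ)
    (pt : Fin N → ℝ × ℝ)
    (J : (Fin M → ℝ) → ℝ)
    (hJ : ∀ ω : Fin M → ℝ, J ω =
      ∑ i : Fin N,
        (-(∑ j : Fin M, ω j * lap (fun a b => B a b * φ j a b) (pt i).1 (pt i).2)
          - f (pt i).1 (pt i).2 - lap s (pt i).1 (pt i).2 - lap P (pt i).1 (pt i).2) ^ 2)
    (ωstar : Fin M → ℝ)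
    (hmin : ∀ ω : Fin M → ℝ, ω ≠ ωstar → J ωstar < J ω) :
    ∀ x ∈ Set.Icc (0 : ℝ) 1, ∀ y ∈ Set.Icc (0 : ℝ) 1,
      B x y * (∑ j : Fin M, ωstar j * φ j x y) + s x y + P x y = u x y := by
  obtain rfl : P = bilinearCorner u := funext₂ hP
  have hs_eq : s = fun a b => u a b - bilinearCorner u a b := funext₂ fun x y => by
    rw [hs, linTransfinite_sub_bilinearCorner hu
      (fun x y => by rw [p1.eval_eq_one_sub_mul_eval_zero_add_mul_eval_one hp1 y]; ring)
      (fun x y => by rw [p2.eval_eq_one_sub_mul_eval_zero_add_mul_eval_one hp2 x]; ring)]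
  have hu_smooth : ContDiff ℝ 2 (uncurry u) := by
    have hp1_smooth := p1.contDiff_aeval (𝕜 := ℝ) 2
    have hp2_smooth := p2.contDiff_aeval (𝕜 := ℝ) 2
    simp only [Polynomial.coe_aeval_eq_eval] at hp1_smooth hp2_smooth
    rw [show uncurry u = fun q => f1 q.1 * p1.eval q.2 + f2 q.2 * p2.eval q.1 from
      funext fun q => hu q.1 q.2]
    fun_prop
  have hresidual (x y : ℝ) : -f x y - lap s x y - lap (bilinearCorner u) x y = 0 := by
    rw [hf, hs_eq, lap_sub hu_smooth (contDiff_bilinearCorner u), lap_bilinearCorner]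
    ring
  have hωstar : ωstar = 0 := by
    by_contra hne
    have hJ0 : J 0 = 0 := by simp [hJ, hresidual]
    exact (hmin 0 (Ne.symm hne)).not_ge
      (hJ0 ▸ hJ ωstar ▸ Finset.sum_nonneg fun i _ => sq_nonneg _)
  intro x _ y _
  simp [hωstar, hs_eq]

/-- Theorem 2.2: exactness of the RNN-BP method for the Poisson equation for solutions of
the form `f1(x)p1(y) + f2(y)p2(x)` with `deg p1, deg p2 ≤ 1`. -/
theorem rnnBP_exact_poisson
    (M N : ℕ)
    (f1 f2 : ℝ → ℝ) (hf1 : ContDiff ℝ 2 f1) (hf2 : ContDiff ℝ 2 f2)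
    (p1 p2 : Polynomial ℝ) (hp1 : p1.degree ≤ 1) (hp2 : p2.degree ≤ 1)
    (u : ℝ → ℝ → ℝ)
    (hu : ∀ x y : ℝ, u x y = f1 x * p1.eval y + f2 y * p2.eval x)
    (f : ℝ → ℝ → ℝ) (hf : ∀ x y : ℝ, f x y = -(lap u x y))
    (P : ℝ → ℝ → ℝ) (hP : ∀ x y : ℝ, P x y = bilinearCorner u x y)
    (s : ℝ → ℝ → ℝ)
    (hs : ∀ x y : ℝ, s x y = linTransfinite (fun a b => u a b - P a b) x y)
    (B : ℝ → ℝ → ℝ) (hB : ∀ x y : ℝ, B x y = x * (1 - x) * y * (1 - y))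
    (φ : Fin M → ℝ → ℝ → ℝ)
    (hφ : ∀ j, ContDiff ℝ 2 (fun p : ℝ × ℝ => φ j p.1 p.2))
    (pt : Fin N → ℝ × ℝ)
    (hpt : ∀ i, pt i ∈ Set.Ioo (0 : ℝ) 1 ×ˢ Set.Ioo (0 : ℝ) 1)
    (J : (Fin M → ℝ) → ℝ)
    (hJ : ∀ ω : Fin M → ℝ, J ω =
      ∑ i : Fin N,
        (-(∑ j : Fin M, ω j * lap (fun a b => B a b * φ j a b) (pt i).1 (pt i).2)
          - f (pt i).1 (pt i).2 - lap s (pt i).1 (pt i).2 - lap P (pt i).1 (pt i).2) ^ 2)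
    (ωstar : Fin M → ℝ)
    (hmin : ∀ ω : Fin M → ℝ, ω ≠ ωstar → J ωstar < J ω) :
    ∀ x ∈ Set.Icc (0 : ℝ) 1, ∀ y ∈ Set.Icc (0 : ℝ) 1,
      B x y * (∑ j : Fin M, ωstar j * φ j x y) + s x y + P x y = u x y :=
  rnnBP_exact_poisson_general M N f1 f2 hf1 hf2 p1 p2 hp1 hp2 u hu f hf P hP s hs B φ pt J hJ ωstar
    hmin
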